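/- arXiv:0910.2393 — 2 statements merged into one kernel-verified Lean document; each statement's English description precedes it below -/
import Mathlib

section
/- Let H be a complex Hilbert space and let φ, ψ be nonzero vectors of H. Then e_H(φ, S) = e_H(ψ, S) for every closed subspace S of H if and only if there exists λ ∈ ℂ with φ = λ • ψ. (The equivalence classes of the state-equivalence relation are exactly the rays of H.) -/
/-- The quantum evaluation `e_H(ψ, S) = ‖P_S ψ‖² / ‖ψ‖²` for a closed subspace `S`
of a complex Hilbert space `H`. -/
noncomputable def qeval {H : Type*} [NormedAddCommGroup H] [InnerProductSpace ℂ H]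
    [CompleteSpace H] (ψ : H) (S : Submodule ℂ H) (hS : IsClosed (S : Set H)) : ℝ :=
  letI : CompleteSpace S := hS.completeSpace_coe
  ‖(S.orthogonalProjection ψ : H)‖ ^ 2 / ‖ψ‖ ^ 2

/-!
A ray is determined by the closed subspaces on which its evaluation is `1`: by Pythagoras,
`e_H(ψ, S) = 1` exactly when `ψ ∈ S`. Testing `φ` on the line `ℂ ψ`, where `ψ` evaluates to `1`,
puts `φ` on that line; conversely `e_H` is invariant under nonzero scalars since `P_S` is linear.
-/

section

variable {H : Type*} [NormedAddCommGroup H] [InnerProductSpace ℂ H] [CompleteSpace H]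

theorem qeval_eq_one_iff_mem {ψ : H} (hψ : ψ ≠ 0) {S : Submodule ℂ H}
    (hS : IsClosed (S : Set H)) : qeval ψ S hS = 1 ↔ ψ ∈ S := by
  have : CompleteSpace S := hS.completeSpace_coe
  rw [qeval, div_eq_one_iff_eq (by positivity), S.mem_iff_norm_starProjection]
  exact pow_left_inj₀ (norm_nonneg _) (norm_nonneg _) two_ne_zero

theorem qeval_smul {c : ℂ} (hc : c ≠ 0) (ψ : H) (S : Submodule ℂ H)
    (hS : IsClosed (S : Set H)) : qeval (c • ψ) S hS = qeval ψ S hS := by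
  have : CompleteSpace S := hS.completeSpace_coe
  simp only [qeval, map_smul, Submodule.coe_smul, norm_smul, mul_pow]
  exact mul_div_mul_left _ _ (by positivity)

end

/-- Two nonzero vectors `φ`, `ψ` of a complex Hilbert space have the same evaluation on every
closed subspace iff they lie on the same ray: `φ = λ • ψ` for some `λ ∈ ℂ`.  (The equivalence
classes of the state-equivalence relation are exactly the rays.) -/
theorem qeval_state_equiv_iff_ray {H : Type*} [NormedAddCommGroup H] [InnerProductSpace ℂ H]
    [CompleteSpace H] (φ ψ : H) (hφ : φ ≠ 0) (hψ : ψ ≠ 0) :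
    (∀ (S : Submodule ℂ H) (hS : IsClosed (S : Set H)), qeval φ S hS = qeval ψ S hS) ↔
      ∃ lam : ℂ, φ = lam • ψ := by
  constructor
  · intro h
    have hS : IsClosed ((ℂ ∙ ψ : Submodule ℂ H) : Set H) := Submodule.closed_of_finiteDimensional _
    have hψ_one : qeval ψ (ℂ ∙ ψ) hS = 1 :=
      (qeval_eq_one_iff_mem hψ hS).2 (Submodule.mem_span_singleton_self ψ)
    have hφ_mem : φ ∈ ℂ ∙ ψ := (qeval_eq_one_iff_mem hφ hS).1 ((h _ hS).trans hψ_one)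
    obtain ⟨lam, hlam⟩ := Submodule.mem_span_singleton.1 hφ_mem
    exact ⟨lam, hlam.symm⟩
  · rintro ⟨lam, rfl⟩ S hS
    exact qeval_smul (left_ne_zero_of_smul hφ) ψ S hS
end

section
/- Let H and K be complex Hilbert spaces with H nontrivial (H ≠ {0}), let σ : ℂ →+* ℂ be a surjective ring homomorphism, and let g : H → K be an injective σ-semilinear map (additive, with g(λψ) = σ(λ)·g(ψ)). Suppose there exists a function f^* from closed subspaces of K to closed subspaces of H such that for every nonzero ψ ∈ H and every closed subspace S of K, e_H(ψ, f^*(S)) = e_K(g(ψ), S). Then g is surjective. -/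
section QuantumEvaluation

variable {E : Type*} [NormedAddCommGroup E] [InnerProductSpace ℂ E] [CompleteSpace E]

theorem qeval_eq_zero_iff (ψ : E) {S : Submodule ℂ E} (hS : IsClosed (S : Set E)) :
    qeval ψ S hS = 0 ↔ ψ ∈ Sᗮ := by
  have : CompleteSpace S := hS.completeSpace_coe
  rw [qeval, div_eq_zero_iff, pow_eq_zero_iff two_ne_zero, pow_eq_zero_iff two_ne_zero,
    norm_eq_zero, norm_eq_zero, ZeroMemClass.coe_eq_zero,
    Submodule.orthogonalProjectionOnto_eq_zero_iff]
  exact or_iff_left_of_imp fun h ↦ h ▸ Sᗮ.zero_mem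

theorem qeval_eq_one_iff {ψ : E} (hψ : ψ ≠ 0) {S : Submodule ℂ E} (hS : IsClosed (S : Set E)) :
    qeval ψ S hS = 1 ↔ ψ ∈ S := by
  have : CompleteSpace S := hS.completeSpace_coe
  have hψS : ψ ∈ S ↔ Sᗮ.starProjection ψ = 0 := by
    rw [Submodule.starProjection_apply, ZeroMemClass.coe_eq_zero,
      Submodule.orthogonalProjectionOnto_eq_zero_iff, Submodule.orthogonal_orthogonal]
  rw [qeval, div_eq_one_iff_eq (by positivity), hψS,
    Submodule.norm_sq_eq_add_norm_sq_starProjection ψ S]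
  change ‖S.starProjection ψ‖ ^ 2 = _ ↔ _
  rw [left_eq_add, pow_eq_zero_iff two_ne_zero, norm_eq_zero]

end QuantumEvaluation

theorem Submodule.eq_bot_or_eq_top_of_forall_notMem_mem_orthogonal {𝕜 E : Type*} [RCLike 𝕜]
    [NormedAddCommGroup E] [InnerProductSpace 𝕜 E] {W : Submodule 𝕜 E}
    (h : ∀ v ∉ W, v ∈ Wᗮ) : W = ⊥ ∨ W = ⊤ := by
  refine or_iff_not_imp_right.2 fun hW ↦ (Submodule.eq_bot_iff W).2 fun w hw ↦ ?_
  obtain ⟨v, hv⟩ : ∃ v, v ∉ W := by simpa [Submodule.eq_top_iff'] using hW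
  have hvw : v + w ∈ Wᗮ := h _ fun hvw ↦ hv ((W.add_mem_iff_left hw).1 hvw)
  have hw' : w ∈ Wᗮ := by simpa using Wᗮ.sub_mem hvw (h v hv)
  exact (Submodule.disjoint_def.1 W.orthogonal_disjoint) w hw hw'

section ChuMorphism

abbrev ClosedSubspace (E : Type*) [NormedAddCommGroup E] [InnerProductSpace ℂ E] :=
  {S : Submodule ℂ E // IsClosed (S : Set E)}

def ClosedSubspace.span_singleton {E : Type*} [NormedAddCommGroup E] [InnerProductSpace ℂ E]
    (v : E) : ClosedSubspace E :=
  ⟨ℂ ∙ v, Submodule.closed_of_finiteDimensional _⟩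

variable {H K : Type*} [NormedAddCommGroup H] [InnerProductSpace ℂ H] [CompleteSpace H]
  [NormedAddCommGroup K] [InnerProductSpace ℂ K] [CompleteSpace K]

def IsChuMorphism (g : H → K) (f : ClosedSubspace K → ClosedSubspace H) : Prop :=
  ∀ (ψ : H), ψ ≠ 0 → ∀ S : ClosedSubspace K, qeval ψ (f S).1 (f S).2 = qeval (g ψ) S.1 S.2

variable {σ : ℂ →+* ℂ} [RingHomSurjective σ] {G : H →ₛₗ[σ] K}
  {f : ClosedSubspace K → ClosedSubspace H}

theorem IsChuMorphism.eq_bot_of_notMem_range (hchu : IsChuMorphism G f)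
    (hG : Function.Injective G) {v : K} (hv : v ∉ LinearMap.range G) :
    (f (ClosedSubspace.span_singleton v)).1 = ⊥ := by
  refine (Submodule.eq_bot_iff _).2 fun χ hχ ↦ ?_
  by_contra hχ0
  have hGχ : G χ ∈ (ClosedSubspace.span_singleton v).1 := by
    rw [← qeval_eq_one_iff ((map_ne_zero_iff G hG).2 hχ0) (ClosedSubspace.span_singleton v).2,
      ← hchu χ hχ0]
    exact (qeval_eq_one_iff hχ0 _).2 hχ
  obtain ⟨c, hc⟩ := Submodule.mem_span_singleton.1 hGχ
  have hc0 : c ≠ 0 := by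
    rintro rfl
    exact (map_ne_zero_iff G hG).2 hχ0 (by rw [← hc, zero_smul])
  exact hv ((Submodule.smul_mem_iff _ hc0).1 (hc ▸ LinearMap.mem_range_self G χ))

theorem IsChuMorphism.mem_orthogonal_range_of_notMem_range (hchu : IsChuMorphism G f)
    (hG : Function.Injective G) {v : K} (hv : v ∉ LinearMap.range G) :
    v ∈ (LinearMap.range G)ᗮ := by
  rintro _ ⟨ψ, rfl⟩
  obtain rfl | hψ := eq_or_ne ψ 0
  · simp
  have hψ_perp : ψ ∈ (f (ClosedSubspace.span_singleton v)).1ᗮ := by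
    rw [hchu.eq_bot_of_notMem_range hG hv, Submodule.bot_orthogonal_eq_top]
    trivial
  rw [← qeval_eq_zero_iff _ (f _).2, hchu ψ hψ, qeval_eq_zero_iff] at hψ_perp
  exact Submodule.mem_orthogonal_singleton_iff_inner_left.1 hψ_perp

end ChuMorphism

/-- Let `H ≠ {0}` and `K` be complex Hilbert spaces, `σ : ℂ →+* ℂ` a surjective ring
homomorphism, and `g : H → K` an injective `σ`-semilinear map.  If there is a map `f₂` from
closed subspaces of `K` to closed subspaces of `H` making `(P g, f₂)` a Chu morphism, i.e.
`e_H(ψ, f₂ S) = e_K(g ψ, S)` for all nonzero `ψ` and closed `S`, then `g` is surjective. -/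
theorem chu_semilinear_surjective
    {H K : Type*} [NormedAddCommGroup H] [InnerProductSpace ℂ H] [CompleteSpace H]
    [NormedAddCommGroup K] [InnerProductSpace ℂ K] [CompleteSpace K]
    [Nontrivial H]
    (σ : ℂ →+* ℂ) (hσ : Function.Surjective σ)
    (g : H → K) (hginj : Function.Injective g)
    (hadd : ∀ x y : H, g (x + y) = g x + g y)
    (hsmul : ∀ (lam : ℂ) (x : H), g (lam • x) = σ lam • g x)
    (f₂ : {S : Submodule ℂ K // IsClosed (S : Set K)} →
          {S : Submodule ℂ H // IsClosed (S : Set H)})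
    (hchu : ∀ (ψ : H) (hψ : ψ ≠ 0) (S : {S : Submodule ℂ K // IsClosed (S : Set K)}),
      qeval ψ (f₂ S).1 (f₂ S).2 = qeval (g ψ) S.1 S.2) :
    Function.Surjective g := by
  have : RingHomSurjective σ := ⟨hσ⟩
  let G : H →ₛₗ[σ] K := { toFun := g, map_add' := hadd, map_smul' := hsmul }
  have hchu : IsChuMorphism G f₂ := hchu
  rcases Submodule.eq_bot_or_eq_top_of_forall_notMem_mem_orthogonal
      fun v ↦ hchu.mem_orthogonal_range_of_notMem_range hginj with hbot | htop
  · obtain ⟨ψ, hψ⟩ := exists_ne (0 : H)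
    have hG0 : G = 0 := LinearMap.range_eq_bot.1 hbot
    exact absurd (hginj (by simp [hG0] : G ψ = G 0)) hψ
  · exact LinearMap.range_eq_top.1 htop
end
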